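/- Let F be a filter on a topological space X generated by open sets and maximal among proper filters generated by families of open sets. If U ∈ F and V ⊆ U is open and dense in U, then V ∈ F. -/
import Mathlib


theorem maximal_open_filter_mem_of_dense {X : Type*} [TopologicalSpace X]
    (F : Set (Set X))
    (hFne : F.Nonempty)
    (hopen : ∀ A ∈ F, IsOpen A)
    (hne : ∀ A ∈ F, A.Nonempty)
    (hinter : ∀ A ∈ F, ∀ B ∈ F, A ∩ B ∈ F)
    (hup : ∀ A ∈ F, ∀ B : Set X, IsOpen B → A ⊆ B → B ∈ F)
    (hmax : ∀ F' : Set (Set X), F'.Nonempty →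
      (∀ A ∈ F', IsOpen A) → (∀ A ∈ F', A.Nonempty) →
      (∀ A ∈ F', ∀ B ∈ F', A ∩ B ∈ F') →
      (∀ A ∈ F', ∀ B : Set X, IsOpen B → A ⊆ B → B ∈ F') →
      F ⊆ F' → F' = F)
    (U : Set X) (hU : U ∈ F)
    (V : Set X) (hV : IsOpen V) (hVU : V ⊆ U) (hdense : U ⊆ closure V) :
    V ∈ F := by
  set F' : Set (Set X) := {A | IsOpen A ∧ ∃ B ∈ F, V ∩ B ⊆ A} with hF'
  have hVF' : V ∈ F' := ⟨hV, U, hU, Set.inter_subset_left⟩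
  have key : F' = F := by
    apply hmax
    · exact ⟨V, hVF'⟩
    · exact fun A hA => hA.1
    · rintro A ⟨hAo, B, hB, hBA⟩
      -- V ∩ B is nonempty since B ∩ U is nonempty open and U ⊆ closure V
      have hBU : B ∩ U ∈ F := hinter B hB U hU
      obtain ⟨x, hxB, hxU⟩ := hne _ hBU
      have hxcl : x ∈ closure V := hdense hxU
      obtain ⟨y, hyBU, hyV⟩ :=
        (mem_closure_iff.mp hxcl) (B ∩ U) ((hopen B hB).inter (hopen U hU)) ⟨hxB, hxU⟩
      exact ⟨y, hBA ⟨hyV, hyBU.1⟩⟩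
    · rintro A ⟨hAo, B, hB, hBA⟩ C ⟨hCo, D, hD, hDC⟩
      refine ⟨hAo.inter hCo, B ∩ D, hinter B hB D hD, ?_⟩
      rintro z ⟨hzV, hzB, hzD⟩
      exact ⟨hBA ⟨hzV, hzB⟩, hDC ⟨hzV, hzD⟩⟩
    · rintro A ⟨hAo, B, hB, hBA⟩ C hCo hAC
      exact ⟨hCo, B, hB, hBA.trans hAC⟩
    · intro A hA
      exact ⟨hopen A hA, A, hA, Set.inter_subset_right⟩
  rw [← key]
  exact hVF'
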